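/- Let A be an N×n real matrix of rank r ≥ 1 with full left singular vector matrix U ∈ ℝ^{N×r}, let E be any N×n real matrix, let Ũ_r ∈ ℝ^{N×r} be a matrix of orthonormal left singular vectors of Ã = A + E for its r largest singular values σ̃_1 ≥ … ≥ σ̃_r, and set D̃_r = diag(σ̃_1,…,σ̃_r). Then there exists an orthogonal matrix O ∈ ℝ^{r×r} such that ‖Ũ_r·D̃_r − U·O·D̃_r‖_{2,∞} ≤ ‖Ũ_r·D̃_r − U·Uᵀ·Ũ_r·D̃_r‖_{2,∞} + ‖U‖_{2,∞}·‖(I_N − UUᵀ)·Ũ_r·Ũ_rᵀ‖·‖E‖. -/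

import Mathlib

open MeasureTheory ProbabilityTheory Matrix

noncomputable section

/-- ℓ²→ℓ² operator (spectral) norm of a real matrix. -/
def opNorm {m n : Type*} [Fintype m] [Fintype n] [DecidableEq n]
    (M : Matrix m n ℝ) : ℝ :=
  ‖LinearMap.toContinuousLinearMap (Matrix.toEuclideanLin M)‖

/-- ℓ²→ℓ² operator (spectral) norm of a complex matrix. -/
def opNormC {m n : Type*} [Fintype m] [Fintype n] [DecidableEq n]
    (M : Matrix m n ℂ) : ℝ :=
  ‖LinearMap.toContinuousLinearMap (Matrix.toEuclideanLin M)‖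

/-- Euclidean norm of a finitely indexed real vector. -/
def vnorm {n : Type*} [Fintype n] (x : n → ℝ) : ℝ :=
  Real.sqrt (∑ i, (x i) ^ 2)

/-- `‖M‖_{2,∞}`: the maximum Euclidean norm of the rows of `M`. -/
def twoInf {m n : Type*} [Fintype m] [Fintype n] (M : Matrix m n ℝ) : ℝ :=
  ⨆ i, vnorm (M i)

/-- The diagonal matrix `diag (σ 1, …, σ m)` built from a 1-indexed sequence `σ`. -/
def sdiag {m : ℕ} (σ : ℕ → ℝ) : Matrix (Fin m) (Fin m) ℝ :=
  Matrix.of fun i j => if i = j then σ ((i : ℕ) + 1) else 0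

/-- Orthogonal projection `W_{k,s} W_{k,s}ᵀ` onto the span of the (1-indexed)
columns `k,…,s` of `W`. -/
def projSlice {N m : ℕ} (W : Matrix (Fin N) (Fin m) ℝ) (k s : ℕ) :
    Matrix (Fin N) (Fin N) ℝ :=
  Matrix.of fun a b =>
    ∑ j : Fin m, if k ≤ (j : ℕ) + 1 ∧ (j : ℕ) + 1 ≤ s then W a j * W b j else 0

/-- `‖·‖_{2,∞}` of the submatrix of `M` given by the (1-indexed) columns `k,…,s`. -/
def sliceTwoInf {N m : ℕ} (M : Matrix (Fin N) (Fin m) ℝ) (k s : ℕ) : ℝ :=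
  ⨆ a, Real.sqrt (∑ j : Fin m,
    if k ≤ (j : ℕ) + 1 ∧ (j : ℕ) + 1 ≤ s then (M a j) ^ 2 else 0)

/-- `η = (11 b²/(b−1)²) √(2 (log 9) r + (K+7) log(N+n))`. -/
def eta (N n r : ℕ) (K b : ℝ) : ℝ :=
  11 * b ^ 2 / (b - 1) ^ 2 *
    Real.sqrt (2 * Real.log 9 * r + (K + 7) * Real.log ((N : ℝ) + n))

/-- `χ(b) = 1 + 1/(4b(b−1))`. -/
def chi (b : ℝ) : ℝ := 1 + 1 / (4 * b * (b - 1))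

/-- `ξ(b) = 1 + 1/(2(b−1)²)`. -/
def xib (b : ℝ) : ℝ := 1 + 1 / (2 * (b - 1) ^ 2)

/-- `γ = (9 b²/(b−1)²) √(r (K+7) log(N+n))`. -/
def gam (N n r : ℕ) (K b : ℝ) : ℝ :=
  9 * b ^ 2 / (b - 1) ^ 2 *
    Real.sqrt ((r : ℝ) * (K + 7) * Real.log ((N : ℝ) + n))

/-- `min {δ_{k-1}, δ_s}` where `δ_j = σ_j − σ_{j+1}` (1-indexed) and `δ_0 = ∞`
(so for `k = 1` the minimum is just `δ_s`). -/
def dmin (σ : ℕ → ℝ) (k s : ℕ) : ℝ :=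
  if k = 1 then σ s - σ (s + 1) else min (σ (k - 1) - σ k) (σ s - σ (s + 1))

/-- The symmetric dilation `ℰ = [[0, E], [Eᵀ, 0]]` of a rectangular matrix `E`. -/
def dil {N n : ℕ} (E : Matrix (Fin N) (Fin n) ℝ) :
    Matrix (Fin N ⊕ Fin n) (Fin N ⊕ Fin n) ℝ :=
  Matrix.fromBlocks 0 E Eᵀ 0

/-- Complex resolvent `G(z) = (z I − ℰ)⁻¹` of the dilation. -/
def resolvC {N n : ℕ} (z : ℂ) (E : Matrix (Fin N) (Fin n) ℝ) :
    Matrix (Fin N ⊕ Fin n) (Fin N ⊕ Fin n) ℂ :=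
  (z • (1 : Matrix (Fin N ⊕ Fin n) (Fin N ⊕ Fin n) ℂ) -
      (dil E).map (Complex.ofReal))⁻¹

/-- `φ₁(z) = z − ∑_{t=N+1}^{N+n} G(z)_{tt}` (complex version). -/
def phi1C {N n : ℕ} (z : ℂ) (E : Matrix (Fin N) (Fin n) ℝ) : ℂ :=
  z - ∑ t : Fin n, resolvC z E (Sum.inr t) (Sum.inr t)

/-- `φ₂(z) = z − ∑_{t=1}^{N} G(z)_{tt}` (complex version). -/
def phi2C {N n : ℕ} (z : ℂ) (E : Matrix (Fin N) (Fin n) ℝ) : ℂ :=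
  z - ∑ t : Fin N, resolvC z E (Sum.inl t) (Sum.inl t)

/-- Real resolvent `G(z) = (z I − ℰ)⁻¹` of the dilation, for real `z`. -/
def resolvR {N n : ℕ} (z : ℝ) (E : Matrix (Fin N) (Fin n) ℝ) :
    Matrix (Fin N ⊕ Fin n) (Fin N ⊕ Fin n) ℝ :=
  (z • (1 : Matrix (Fin N ⊕ Fin n) (Fin N ⊕ Fin n) ℝ) - dil E)⁻¹

/-- `φ₁(z)` for real `z` (equals the complex version at a real point). -/
def phi1R {N n : ℕ} (z : ℝ) (E : Matrix (Fin N) (Fin n) ℝ) : ℝ :=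
  z - ∑ t : Fin n, resolvR z E (Sum.inr t) (Sum.inr t)

/-- `φ₂(z)` for real `z` (equals the complex version at a real point). -/
def phi2R {N n : ℕ} (z : ℝ) (E : Matrix (Fin N) (Fin n) ℝ) : ℝ :=
  z - ∑ t : Fin N, resolvR z E (Sum.inl t) (Sum.inl t)

/-- `Φ(z)`: diagonal matrix whose first `N` diagonal entries are `1/φ₁(z)` and whose
last `n` diagonal entries are `1/φ₂(z)`. -/
def PhiC {N n : ℕ} (z : ℂ) (E : Matrix (Fin N) (Fin n) ℝ) :
    Matrix (Fin N ⊕ Fin n) (Fin N ⊕ Fin n) ℂ :=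
  Matrix.of fun p q =>
    if p = q then Sum.elim (fun _ => (phi1C z E)⁻¹) (fun _ => (phi2C z E)⁻¹) p else 0

/-- The `(N+n) × 2r` matrix `𝒰` of eigenvectors of the dilation of `A = U D Vᵀ`. -/
def calU {N n r : ℕ} (U : Matrix (Fin N) (Fin r) ℝ) (V : Matrix (Fin n) (Fin r) ℝ) :
    Matrix (Fin N ⊕ Fin n) (Fin r ⊕ Fin r) ℝ :=
  Matrix.fromBlocks ((Real.sqrt 2)⁻¹ • U) ((Real.sqrt 2)⁻¹ • U)
    ((Real.sqrt 2)⁻¹ • V) (-((Real.sqrt 2)⁻¹ • V))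

/-- Schatten `p`-norm: `(∑ᵢ sᵢ(M)ᵖ)^{1/p}`, where the singular values `sᵢ(M)` are the
square roots of the eigenvalues of `Mᴴ M`. -/
def schatten (p : ℝ) {m r : ℕ} (M : Matrix (Fin m) (Fin r) ℝ) : ℝ :=
  (∑ i, Real.sqrt ((show (Mᵀ * M).IsHermitian by
    simpa [Matrix.conjTranspose_eq_transpose_of_trivial] using
      Matrix.isHermitian_conjTranspose_mul_self M).eigenvalues i) ^ p) ^ (1 / p)

/-!
Write `B = Ũ_r`, `D = D̃_r` and `H = UᵀB`, and take for `O` the orthogonal polar factor of `H`: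
if `H = P S Qᵀ` is a singular value decomposition, `O = P Qᵀ`. Then
`BD - UOD = (BD - UUᵀBD) + U(H - O)D`, so it remains to bound `‖(H - O)D‖`.
As `|s - 1| ≤ |1 - s²|` for `s ≥ 0`, `‖(H - O)D‖ ≤ ‖(I - HᵀH)D‖`, and
`(I - HᵀH)D = Bᵀ(I - UUᵀ)BD = Bᵀ(I - UUᵀ)(A + E)Ṽ_r = ((I - UUᵀ)B)ᵀ E Ṽ_r`,
because `BD = (A + E)Ṽ_r` and `(I - UUᵀ)A = 0`. Finally `‖(I - UUᵀ)B‖ = ‖(I - UUᵀ)BBᵀ‖`.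
-/

open scoped Matrix.Norms.L2Operator RealInnerProductSpace

lemma exists_orthonormalBasis_forall_eq_norm_smul {E ι : Type*} [NormedAddCommGroup E]
    [InnerProductSpace ℝ E] [FiniteDimensional ℝ E] [Fintype ι]
    (hcard : Module.finrank ℝ E = Fintype.card ι) {f : ι → E}
    (hf : Pairwise fun i j => ⟪f i, f j⟫ = 0) :
    ∃ b : OrthonormalBasis ι ℝ E, ∀ i, f i = ‖f i‖ • b i := by
  have hv : Orthonormal ℝ ({i | f i ≠ 0}.domRestrict fun i => ‖f i‖⁻¹ • f i) := by
    refine ⟨fun i => norm_smul_inv_norm i.2, fun i j hij => ?_⟩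
    simp [real_inner_smul_left, real_inner_smul_right, hf (Subtype.coe_ne_coe.mpr hij)]
  obtain ⟨b, hb⟩ := hv.exists_orthonormalBasis_extension_of_card_eq hcard
  refine ⟨b, fun i => ?_⟩
  by_cases hi : f i = 0
  · simp [hi]
  · rw [hb i hi, smul_inv_smul₀ (norm_ne_zero_iff.mpr hi)]

namespace Matrix

lemma transpose_mul_self_submatrix_eq_one {ι m α : Type*} [Fintype ι] [DecidableEq m]
    [DecidableEq α] {W : Matrix ι m ℝ} (hW : Wᵀ * W = 1) {e : α → m} (he : e.Injective) :
    (W.submatrix id e)ᵀ * W.submatrix id e = 1 := by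
  rw [transpose_submatrix, ← submatrix_mul _ _ _ _ _ Function.bijective_id, hW,
    submatrix_one _ he]

variable {ι κ m n : Type*} [Fintype ι] [Fintype κ] [Fintype m] [Fintype n]

lemma l2_opNorm_transpose [DecidableEq m] [DecidableEq n] (M : Matrix m n ℝ) : ‖Mᵀ‖ = ‖M‖ := by
  simpa only [conjTranspose_eq_transpose_of_trivial] using l2_opNorm_conjTranspose M

lemma l2_opNorm_one_le [DecidableEq n] : ‖(1 : Matrix n n ℝ)‖ ≤ 1 := by
  rw [← diagonal_one, l2_opNorm_diagonal]
  exact pi_norm_le_iff_of_nonneg zero_le_one |>.mpr fun _ => by simp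

lemma l2_opNorm_le_one_of_transpose_mul_self_eq_one [DecidableEq n] {W : Matrix m n ℝ}
    (hW : Wᵀ * W = 1) : ‖W‖ ≤ 1 := by
  have h := l2_opNorm_conjTranspose_mul_self W
  rw [conjTranspose_eq_transpose_of_trivial, hW] at h
  nlinarith [norm_nonneg W, l2_opNorm_one_le (n := n)]

lemma l2_opNorm_mul_of_transpose_mul_self_eq_one [DecidableEq m] [DecidableEq n] [DecidableEq κ]
    {W : Matrix m n ℝ} (hW : Wᵀ * W = 1) (X : Matrix n κ ℝ) : ‖W * X‖ = ‖X‖ := by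
  have hW₁ := l2_opNorm_le_one_of_transpose_mul_self_eq_one hW
  refine le_antisymm ?_ ?_
  · calc ‖W * X‖ ≤ ‖W‖ * ‖X‖ := l2_opNorm_mul W X
      _ ≤ ‖X‖ := mul_le_of_le_one_left (norm_nonneg X) hW₁
  · calc ‖X‖ = ‖Wᵀ * (W * X)‖ := by rw [← Matrix.mul_assoc, hW, Matrix.one_mul]
      _ ≤ ‖Wᵀ‖ * ‖W * X‖ := l2_opNorm_mul _ _
      _ ≤ ‖W * X‖ := by
        rw [l2_opNorm_transpose]
        exact mul_le_of_le_one_left (norm_nonneg _) hW₁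

lemma l2_opNorm_mul_mul_transpose [DecidableEq m] [DecidableEq n] {W : Matrix m n ℝ}
    (hW : Wᵀ * W = 1) (X : Matrix κ m ℝ) : ‖X * (W * Wᵀ)‖ = ‖X * W‖ := by
  have hW₁ := l2_opNorm_le_one_of_transpose_mul_self_eq_one hW
  refine le_antisymm ?_ ?_
  · calc ‖X * (W * Wᵀ)‖ = ‖X * W * Wᵀ‖ := by rw [Matrix.mul_assoc]
      _ ≤ ‖X * W‖ * ‖Wᵀ‖ := l2_opNorm_mul _ _
      _ ≤ ‖X * W‖ := by
        rw [l2_opNorm_transpose]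
        exact mul_le_of_le_one_right (norm_nonneg _) hW₁
  · calc ‖X * W‖ = ‖X * (W * Wᵀ) * W‖ := by
          rw [Matrix.mul_assoc, Matrix.mul_assoc, hW, Matrix.mul_one]
      _ ≤ ‖X * (W * Wᵀ)‖ * ‖W‖ := l2_opNorm_mul _ _
      _ ≤ ‖X * (W * Wᵀ)‖ := mul_le_of_le_one_right (norm_nonneg _) hW₁

lemma l2_opNorm_diagonal_mul_le [DecidableEq m] [DecidableEq n] {a b : m → ℝ}
    (hab : ∀ i, |a i| ≤ |b i|) (X : Matrix m n ℝ) : ‖diagonal a * X‖ ≤ ‖diagonal b * X‖ := by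
  have hfac : diagonal a = diagonal (fun i => a i / b i) * diagonal b := by
    rw [diagonal_mul_diagonal]
    congr 1
    funext i
    rcases eq_or_ne (b i) 0 with hb | hb
    · simpa [hb] using hab i
    · exact (div_mul_cancel₀ _ hb).symm
  have hle : ‖fun i => a i / b i‖ ≤ 1 := pi_norm_le_iff_of_nonneg zero_le_one |>.mpr fun i => by
    rw [Real.norm_eq_abs, abs_div]
    exact div_le_one_of_le₀ (hab i) (abs_nonneg _)
  calc ‖diagonal a * X‖ ≤ ‖diagonal (fun i => a i / b i)‖ * ‖diagonal b * X‖ := by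
        rw [hfac, Matrix.mul_assoc]
        exact l2_opNorm_mul _ _
    _ ≤ ‖diagonal b * X‖ := by
        rw [l2_opNorm_diagonal]
        exact mul_le_of_le_one_left (norm_nonneg _) hle

lemma one_sub_mul_transpose_mul_eq_zero [DecidableEq m] [DecidableEq n] {U : Matrix m n ℝ}
    (hU : Uᵀ * U = 1) : (1 - U * Uᵀ) * U = 0 := by
  rw [Matrix.sub_mul, Matrix.one_mul, Matrix.mul_assoc, hU, Matrix.mul_one, sub_self]

lemma exists_orthogonal_mul_diagonal_sqrt_eq [DecidableEq ι] {C : Matrix ι ι ℝ} {μ : ι → ℝ}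
    (hC : Cᵀ * C = diagonal μ) :
    ∃ Q : Matrix ι ι ℝ, Qᵀ * Q = 1 ∧ C = Q * diagonal fun i => √(μ i) := by
  let col : ι → EuclideanSpace ℝ ι := fun i => WithLp.toLp 2 fun j => C j i
  have hinner : ∀ i j, ⟪col i, col j⟫ = (Cᵀ * C) i j := fun i j => by
    simp [col, PiLp.inner_apply, mul_apply, mul_comm]
  obtain ⟨b, hb⟩ := exists_orthonormalBasis_forall_eq_norm_smul finrank_euclideanSpace
    (f := col) fun i j hij => by simp only [hinner, hC, diagonal_apply_ne _ hij]
  have hnorm : ∀ i, ‖col i‖ = √(μ i) := fun i => by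
    rw [norm_eq_sqrt_real_inner, hinner, hC, diagonal_apply_eq]
  let Q := (EuclideanSpace.basisFun ι ℝ).toBasis.toMatrix b.toBasis
  have hQ := (EuclideanSpace.basisFun ι ℝ).toMatrix_orthonormalBasis_mem_unitary b
  refine ⟨Q, ?_, ?_⟩
  · simpa [Q, mem_unitaryGroup_iff', star_eq_conjTranspose] using hQ
  · ext j i
    have hcol := congrArg (fun v => v j) (hb i)
    simp only [col, hnorm] at hcol
    simp [Q, mul_diagonal, Module.Basis.toMatrix_apply, hcol, mul_comm]

lemma exists_svd [DecidableEq ι] (H : Matrix ι ι ℝ) :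
    ∃ (P Q : Matrix ι ι ℝ) (s : ι → ℝ), Pᵀ * P = 1 ∧ Qᵀ * Q = 1 ∧ (∀ i, 0 ≤ s i) ∧
      H = P * diagonal s * Qᵀ := by
  have hM : (Hᵀ * H).IsHermitian := by
    simpa only [conjTranspose_eq_transpose_of_trivial] using isHermitian_conjTranspose_mul_self H
  set W : Matrix ι ι ℝ := (hM.eigenvectorUnitary : Matrix ι ι ℝ)
  have hWW : Wᵀ * W = 1 := by
    simpa [star_eq_conjTranspose] using Unitary.coe_star_mul_self hM.eigenvectorUnitary
  have hdiag : (H * W)ᵀ * (H * W) = diagonal hM.eigenvalues := by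
    have h := hM.conjStarAlgAut_star_eigenvectorUnitary
    simp only [Unitary.conjStarAlgAut_star_apply, star_eq_conjTranspose,
      conjTranspose_eq_transpose_of_trivial, RCLike.ofReal_real_eq_id, Function.id_comp] at h
    rw [transpose_mul, ← h]
    simp only [W, Matrix.mul_assoc]
  obtain ⟨P, hP, hHW⟩ := exists_orthogonal_mul_diagonal_sqrt_eq hdiag
  exact ⟨P, W, _, hP, hWW, fun i => Real.sqrt_nonneg _, by
    rw [← hHW, Matrix.mul_assoc, mul_eq_one_comm.mp hWW, Matrix.mul_one]⟩

lemma exists_orthogonal_l2_opNorm_sub_mul_le [DecidableEq ι] [DecidableEq κ]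
    (H : Matrix ι ι ℝ) (D : Matrix ι κ ℝ) :
    ∃ O : Matrix ι ι ℝ, Oᵀ * O = 1 ∧ ‖(H - O) * D‖ ≤ ‖(1 - Hᵀ * H) * D‖ := by
  obtain ⟨P, Q, s, hP, hQ, hs, rfl⟩ := exists_svd H
  have hQ' : Q * Qᵀ = 1 := mul_eq_one_comm.mp hQ
  refine ⟨P * Qᵀ, by
    rw [transpose_mul, transpose_transpose, Matrix.mul_assoc, ← Matrix.mul_assoc Pᵀ, hP,
      Matrix.one_mul, hQ'], ?_⟩
  have hdiag_sub : ∀ a b : ι → ℝ, diagonal (a - b) = diagonal a - diagonal b := fun a b =>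
    (diagonal_sub a b).symm
  have hsub : (P * diagonal s * Qᵀ - P * Qᵀ) * D = P * (diagonal (s - 1) * (Qᵀ * D)) := by
    simp only [hdiag_sub, diagonal_one', Matrix.sub_mul, Matrix.mul_sub, Matrix.mul_assoc,
      Matrix.one_mul]
  have hgram : (1 - (P * diagonal s * Qᵀ)ᵀ * (P * diagonal s * Qᵀ)) * D
      = Q * (diagonal (1 - s * s) * (Qᵀ * D)) := by
    have hsq : diagonal (s * s) = diagonal s * diagonal s := (diagonal_mul_diagonal s s).symm
    simp only [hdiag_sub, diagonal_one', hsq, transpose_mul, transpose_transpose,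
      diagonal_transpose, Matrix.sub_mul, Matrix.mul_sub, Matrix.one_mul, Matrix.mul_assoc]
    rw [← Matrix.mul_assoc Pᵀ P, hP, Matrix.one_mul, ← Matrix.mul_assoc Q Qᵀ, hQ',
      Matrix.one_mul]
  rw [hsub, hgram, l2_opNorm_mul_of_transpose_mul_self_eq_one hP,
    l2_opNorm_mul_of_transpose_mul_self_eq_one hQ]
  refine l2_opNorm_diagonal_mul_le (fun i => ?_) _
  simp only [Pi.sub_apply, Pi.one_apply, Pi.mul_apply]
  rw [abs_sub_comm, show 1 - s i * s i = (1 - s i) * (1 + s i) by ring, abs_mul,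
    abs_of_nonneg (by linarith [hs i] : 0 ≤ 1 + s i)]
  exact le_mul_of_one_le_right (abs_nonneg _) (by linarith [hs i])

end Matrix

lemma svd_mul_submatrix_castLE {ι κ : Type*} [Fintype κ] {m r : ℕ} (h : r ≤ m)
    {W : Matrix ι (Fin m) ℝ} {V : Matrix κ (Fin m) ℝ} (hV : Vᵀ * V = 1) (σ : ℕ → ℝ) :
    W * sdiag (m := m) σ * Vᵀ * V.submatrix id (Fin.castLE h) =
      W.submatrix id (Fin.castLE h) * sdiag (m := r) σ := by
  have hVe : Vᵀ * V.submatrix id (Fin.castLE h) =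
      (1 : Matrix (Fin m) (Fin m) ℝ).submatrix id (Fin.castLE h) := by
    rw [← hV]
    rfl
  rw [Matrix.mul_assoc, hVe]
  ext a j
  simp [mul_apply, sdiag, one_apply]

section twoInf

variable {m n κ : Type*} [Fintype m] [Fintype n] [Fintype κ]

lemma vnorm_eq_norm_toLp (x : n → ℝ) : vnorm x = ‖WithLp.toLp 2 x‖ := by
  simp [vnorm, EuclideanSpace.norm_eq]

lemma twoInf_nonneg (M : Matrix m n ℝ) : 0 ≤ twoInf M :=
  Real.iSup_nonneg fun _ => Real.sqrt_nonneg _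

lemma vnorm_le_twoInf (M : Matrix m n ℝ) (i : m) : vnorm (M i) ≤ twoInf M :=
  le_ciSup (f := fun i => vnorm (M i)) (Set.finite_range _).bddAbove i

lemma twoInf_add_le (M M' : Matrix m n ℝ) : twoInf (M + M') ≤ twoInf M + twoInf M' := by
  refine Real.iSup_le (fun i => ?_) (add_nonneg (twoInf_nonneg M) (twoInf_nonneg M'))
  calc vnorm ((M + M') i) ≤ vnorm (M i) + vnorm (M' i) := by
        simp only [vnorm_eq_norm_toLp]
        exact norm_add_le (WithLp.toLp 2 (M i)) (WithLp.toLp 2 (M' i))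
    _ ≤ twoInf M + twoInf M' := add_le_add (vnorm_le_twoInf M i) (vnorm_le_twoInf M' i)

lemma twoInf_mul_le [DecidableEq n] [DecidableEq κ] (M : Matrix m n ℝ) (C : Matrix n κ ℝ) :
    twoInf (M * C) ≤ twoInf M * ‖C‖ := by
  refine Real.iSup_le (fun i => ?_) (mul_nonneg (twoInf_nonneg M) (norm_nonneg C))
  calc vnorm ((M * C) i) = ‖WithLp.toLp 2 (Cᵀ *ᵥ M i)‖ := by
        rw [vnorm_eq_norm_toLp, mulVec_transpose, mul_apply_eq_vecMul]
    _ ≤ ‖Cᵀ‖ * vnorm (M i) := by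
        rw [vnorm_eq_norm_toLp]
        exact l2_opNorm_mulVec Cᵀ (WithLp.toLp 2 (M i))
    _ ≤ twoInf M * ‖C‖ := by
        rw [l2_opNorm_transpose, mul_comm]
        exact mul_le_mul_of_nonneg_right (vnorm_le_twoInf M i) (norm_nonneg C)

end twoInf

lemma opNorm_eq_l2_opNorm {m n : Type*} [Fintype m] [Fintype n] [DecidableEq n]
    (M : Matrix m n ℝ) : opNorm M = ‖M‖ := rfl

lemma l2_opNorm_one_sub_gram_mul_le {ι κ ρ ρ' : Type*} [Fintype ι] [Fintype κ] [Fintype ρ]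
    [Fintype ρ'] [DecidableEq ι] [DecidableEq κ] [DecidableEq ρ] [DecidableEq ρ']
    {A E : Matrix ι κ ℝ} {U : Matrix ι ρ ℝ} {B : Matrix ι ρ' ℝ} {V : Matrix κ ρ' ℝ}
    {D : Matrix ρ' ρ' ℝ} (hB : Bᵀ * B = 1) (hV : Vᵀ * V = 1) (hBD : B * D = (A + E) * V)
    (hPA : (1 - U * Uᵀ) * A = 0) :
    ‖(1 - (Uᵀ * B)ᵀ * (Uᵀ * B)) * D‖ ≤ ‖(1 - U * Uᵀ) * (B * Bᵀ)‖ * ‖E‖ := by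
  set P := 1 - U * Uᵀ
  have hPt : Pᵀ = P := by simp [P, transpose_sub, transpose_mul]
  have hgram : (1 - (Uᵀ * B)ᵀ * (Uᵀ * B)) * D = (P * B)ᵀ * (E * V) :=
    calc (1 - (Uᵀ * B)ᵀ * (Uᵀ * B)) * D = Bᵀ * P * (B * D) := by
          simp only [P, transpose_mul, transpose_transpose, Matrix.mul_sub, Matrix.sub_mul,
            Matrix.one_mul, Matrix.mul_assoc]
          rw [← Matrix.mul_assoc Bᵀ B, hB, Matrix.one_mul]
      _ = (P * B)ᵀ * (E * V) := by
          rw [hBD, transpose_mul, hPt, Matrix.mul_assoc, ← Matrix.mul_assoc P, Matrix.mul_add,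
            hPA, zero_add]
          simp only [Matrix.mul_assoc]
  calc ‖(1 - (Uᵀ * B)ᵀ * (Uᵀ * B)) * D‖ ≤ ‖(P * B)ᵀ‖ * (‖E‖ * ‖V‖) := by
        rw [hgram]
        exact (l2_opNorm_mul _ _).trans
          (mul_le_mul_of_nonneg_left (l2_opNorm_mul _ _) (norm_nonneg _))
    _ ≤ ‖P * B‖ * ‖E‖ := by
        rw [l2_opNorm_transpose]
        have hV₁ := l2_opNorm_le_one_of_transpose_mul_self_eq_one hV
        exact mul_le_mul_of_nonneg_left (mul_le_of_le_one_right (norm_nonneg E) hV₁)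
          (norm_nonneg _)
    _ = ‖P * (B * Bᵀ)‖ * ‖E‖ := by rw [l2_opNorm_mul_mul_transpose hB]

theorem stmt19_weighted_procrustes_decomposition_general
    (N n r : ℕ)
    (A E : Matrix (Fin N) (Fin n) ℝ)
    (U : Matrix (Fin N) (Fin r) ℝ) (V : Matrix (Fin n) (Fin r) ℝ) (σ : ℕ → ℝ)
    (hU : Uᵀ * U = 1) (hA : A = U * sdiag (m := r) σ * Vᵀ)
    (m : ℕ) (hrm : r ≤ m)
    (Ut : Matrix (Fin N) (Fin m) ℝ) (Vt : Matrix (Fin n) (Fin m) ℝ) (σt : ℕ → ℝ)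
    (hUt : Utᵀ * Ut = 1) (hVt : Vtᵀ * Vt = 1)
    (hAt : A + E = Ut * sdiag (m := m) σt * Vtᵀ) :
    ∃ O : Matrix (Fin r) (Fin r) ℝ, Oᵀ * O = 1 ∧
      twoInf (Ut.submatrix id (Fin.castLE hrm) * sdiag (m := r) σt - U * O * sdiag (m := r) σt) ≤
        twoInf (Ut.submatrix id (Fin.castLE hrm) * sdiag (m := r) σt -
            U * (Uᵀ * (Ut.submatrix id (Fin.castLE hrm) * sdiag (m := r) σt))) +
          twoInf U *
            opNorm ((1 - U * Uᵀ) *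
              (Ut.submatrix id (Fin.castLE hrm) *
                (Ut.submatrix id (Fin.castLE hrm))ᵀ)) *
            opNorm E := by
  set B := Ut.submatrix id (Fin.castLE hrm)
  set D : Matrix (Fin r) (Fin r) ℝ := sdiag σt
  have hB : Bᵀ * B = 1 := transpose_mul_self_submatrix_eq_one hUt (Fin.castLE_injective hrm)
  have hVr := transpose_mul_self_submatrix_eq_one hVt (Fin.castLE_injective hrm)
  have hBD : B * D = (A + E) * Vt.submatrix id (Fin.castLE hrm) := by
    rw [hAt, svd_mul_submatrix_castLE hrm hVt]
  have hPA : (1 - U * Uᵀ) * A = 0 := by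
    rw [hA, ← Matrix.mul_assoc, ← Matrix.mul_assoc, one_sub_mul_transpose_mul_eq_zero hU,
      Matrix.zero_mul, Matrix.zero_mul]
  obtain ⟨O, hO, hOD⟩ := exists_orthogonal_l2_opNorm_sub_mul_le (Uᵀ * B) D
  refine ⟨O, hO, ?_⟩
  have hsplit : B * D - U * O * D = (B * D - U * (Uᵀ * (B * D))) + U * ((Uᵀ * B - O) * D) := by
    simp only [Matrix.mul_sub, Matrix.sub_mul, Matrix.mul_assoc]
    abel
  rw [hsplit, opNorm_eq_l2_opNorm, opNorm_eq_l2_opNorm, mul_assoc]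
  refine (twoInf_add_le _ _).trans (add_le_add_right ((twoInf_mul_le _ _).trans ?_) _)
  exact mul_le_mul_of_nonneg_left (hOD.trans (l2_opNorm_one_sub_gram_mul_le hB hVr hBD hPA))
    (twoInf_nonneg U)

/-- inequality (10) / Appendix A.4 of the paper: deterministic
decomposition bound for the weighted Procrustes comparison. -/
theorem stmt19_weighted_procrustes_decomposition
    (N n r : ℕ) (hN : 0 < N) (hn : 0 < n) (hr : 0 < r) (hrN : r ≤ N)
    (A E : Matrix (Fin N) (Fin n) ℝ)
    (U : Matrix (Fin N) (Fin r) ℝ) (V : Matrix (Fin n) (Fin r) ℝ) (σ : ℕ → ℝ)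
    (hU : Uᵀ * U = 1) (hV : Vᵀ * V = 1) (hA : A = U * sdiag (m := r) σ * Vᵀ)
    (hσpos : ∀ j, 1 ≤ j → j ≤ r → 0 < σ j)
    (hσdec : ∀ j, 1 ≤ j → σ (j + 1) ≤ σ j)
    (hσzero : ∀ j, r < j → σ j = 0)
    (m : ℕ) (hm : m = min N n) (hrm : r ≤ m)
    (Ut : Matrix (Fin N) (Fin m) ℝ) (Vt : Matrix (Fin n) (Fin m) ℝ) (σt : ℕ → ℝ)
    (hUt : Utᵀ * Ut = 1) (hVt : Vtᵀ * Vt = 1)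
    (hAt : A + E = Ut * sdiag (m := m) σt * Vtᵀ)
    (hσtdec : ∀ j, 1 ≤ j → σt (j + 1) ≤ σt j)
    (hσtnn : ∀ j, 1 ≤ j → 0 ≤ σt j) :
    ∃ O : Matrix (Fin r) (Fin r) ℝ, Oᵀ * O = 1 ∧
      twoInf (Ut.submatrix id (Fin.castLE hrm) * sdiag (m := r) σt - U * O * sdiag (m := r) σt) ≤
        twoInf (Ut.submatrix id (Fin.castLE hrm) * sdiag (m := r) σt -
            U * (Uᵀ * (Ut.submatrix id (Fin.castLE hrm) * sdiag (m := r) σt))) +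
          twoInf U *
            opNorm ((1 - U * Uᵀ) *
              (Ut.submatrix id (Fin.castLE hrm) *
                (Ut.submatrix id (Fin.castLE hrm))ᵀ)) *
            opNorm E :=
  stmt19_weighted_procrustes_decomposition_general N n r A E U V σ hU hA m hrm Ut Vt σt hUt hVt hAt
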